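/- Let T be a bijective piecewise translation (interval exchange) of a finite disjoint union of intervals X, and suppose T admits an induced first-return map on a subinterval G ⊆ X which is uniquely ergodic with unique invariant measure Lebesgue on G. If X = ⋃_{k=0}^{m} T^k(G) (so every point of X visits G), then any T-invariant probability measure on X is the normalized Lebesgue measure; hence T is uniquely ergodic. -/

import Mathlib

/-!
Every orbit enters `G` (by the covering hypothesis), so Kac's tower decomposition writes any
finite `T`-invariant measure `μ` as a linear expression in `μ.restrict G`; and the restriction
of an invariant measure to `G` is invariant under the first-return map. Hence for an invariant
probability `μ`, the conditional measure `μ[|G]` is invariant under the induced map, so it equals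
`ν[|G]` by unique ergodicity of the induced map. Linearity then gives `μ = c • ν`, and `c = 1`.
-/

open MeasureTheory Filter Function Topology ProbabilityTheory

namespace FirstReturn

variable {α : Type*} {T : α → α} {G : Set α}

def avoidSet (T : α → α) (G : Set α) (n : ℕ) : Set α := {x | ∀ j < n, T^[j] x ∉ G}

def IsFirstReturnTime (T : α → α) (G : Set α) (rt : α → ℕ) : Prop :=
  ∀ x ∈ G, 1 ≤ rt x ∧ T^[rt x] x ∈ G ∧ ∀ k, 0 < k → k < rt x → T^[k] x ∉ G

open Classical in
/-- `hitMap T G hhits ∘ T` is the first-return map to `G`, defined on all of `α`. -/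
noncomputable def hitMap (T : α → α) (G : Set α) (hhits : ∀ x, ∃ n, T^[n] x ∈ G) (x : α) : α :=
  T^[Nat.find (hhits x)] x

lemma avoidSet_zero : avoidSet T G 0 = Set.univ := by
  simp [avoidSet]

lemma antitone_avoidSet : Antitone (avoidSet T G) :=
  fun _ _ hmn _ hx j hj => hx j (hj.trans_le hmn)

lemma iInter_avoidSet_eq_empty (hhits : ∀ x, ∃ n, T^[n] x ∈ G) : ⋂ n, avoidSet T G n = ∅ := by
  refine Set.eq_empty_of_forall_notMem fun x hx => ?_
  obtain ⟨n, hn⟩ := hhits x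
  exact Set.mem_iInter.1 hx (n + 1) n n.lt_succ_self hn

lemma compl_inter_preimage_avoidSet_inter (n : ℕ) (A : Set α) :
    Gᶜ ∩ T ⁻¹' (avoidSet T G n ∩ T^[n] ⁻¹' A) = avoidSet T G (n + 1) ∩ T^[n + 1] ⁻¹' A := by
  ext x
  simp only [avoidSet, Set.mem_inter_iff, Set.mem_compl_iff, Set.mem_preimage, Set.mem_ofPred_eq,
    Nat.forall_lt_succ_left, iterate_zero_apply, iterate_succ_apply, and_assoc]

lemma pairwise_disjoint_avoidSet_inter_preimage (B : Set α) :
    Pairwise (Disjoint on (fun k => avoidSet T G k ∩ T^[k] ⁻¹' (G ∩ B))) := by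
  refine (pairwise_disjoint_on _).2 fun k l hkl => Set.disjoint_left.2 ?_
  rintro x ⟨-, hk, -⟩ ⟨hl, -⟩
  exact hl k hkl hk

lemma hitMap_eq_iterate (hhits : ∀ x, ∃ n, T^[n] x ∈ G) {x : α} {k : ℕ}
    (hx : x ∈ avoidSet T G k) (hk : T^[k] x ∈ G) : hitMap T G hhits x = T^[k] x := by
  classical
  rw [hitMap, (Nat.find_eq_iff _).2 ⟨hk, hx⟩]

lemma preimage_hitMap (hhits : ∀ x, ∃ n, T^[n] x ∈ G) (B : Set α) :
    hitMap T G hhits ⁻¹' B = ⋃ k, avoidSet T G k ∩ T^[k] ⁻¹' (G ∩ B) := by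
  classical
  ext x
  simp only [Set.mem_preimage, Set.mem_iUnion, Set.mem_inter_iff]
  constructor
  · intro hx
    exact ⟨Nat.find (hhits x), fun j hj => Nat.find_min (hhits x) hj, Nat.find_spec (hhits x), hx⟩
  · rintro ⟨k, hk, hkG, hkB⟩
    rwa [hitMap_eq_iterate hhits hk hkG]

lemma hitMap_apply_eq_iterate {rt : α → ℕ} (hrt : IsFirstReturnTime T G rt)
    (hhits : ∀ x, ∃ n, T^[n] x ∈ G) {x : α} (hx : x ∈ G) :
    hitMap T G hhits (T x) = T^[rt x] x := by
  obtain ⟨hpos, hret, hmin⟩ := hrt x hx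
  obtain ⟨k, hk⟩ : ∃ k, rt x = k + 1 := ⟨rt x - 1, by omega⟩
  rw [hk] at hret hmin ⊢
  exact hitMap_eq_iterate hhits (fun j hj => hmin (j + 1) j.succ_pos (by omega)) hret

lemma frequently_iterate_mem (hret : ∀ x ∈ G, ∃ n, 0 < n ∧ T^[n] x ∈ G) {x : α} (hx : x ∈ G) :
    ∃ᶠ n in atTop, T^[n] x ∈ G := by
  refine frequently_atTop.2 fun k => ?_
  induction k with
  | zero => exact ⟨0, le_rfl, hx⟩
  | succ k ih =>
    obtain ⟨t, hkt, ht⟩ := ih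
    obtain ⟨n, hn, hnt⟩ := hret _ ht
    exact ⟨n + t, by omega, by rwa [iterate_add_apply]⟩

lemma exists_iterate_mem_of_mem_image (hret : ∀ x ∈ G, ∃ n, 0 < n ∧ T^[n] x ∈ G) {x : α}
    {k : ℕ} (hx : x ∈ T^[k] '' G) : ∃ n, T^[n] x ∈ G := by
  obtain ⟨g, hg, rfl⟩ := hx
  obtain ⟨t, hkt, ht⟩ := frequently_atTop.1 (frequently_iterate_mem hret hg) k
  refine ⟨t - k, ?_⟩
  rwa [← iterate_add_apply, Nat.sub_add_cancel hkt]

variable [MeasurableSpace α]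

lemma measurableSet_avoidSet (hT : Measurable T) (hG : MeasurableSet G) (n : ℕ) :
    MeasurableSet (avoidSet T G n) := by
  simp only [avoidSet, Set.ofPred_forall]
  exact .iInter fun j => .iInter fun _ => hG.compl.preimage (hT.iterate j)

lemma measurable_hitMap (hT : Measurable T) (hG : MeasurableSet G)
    (hhits : ∀ x, ∃ n, T^[n] x ∈ G) : Measurable (hitMap T G hhits) := by
  classical
  exact Measurable.find (fun n => hT.iterate n) (fun n => hG.preimage (hT.iterate n)) hhits

lemma tendsto_measure_avoidSet (μ : Measure α) [IsFiniteMeasure μ] (hT : Measurable T)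
    (hG : MeasurableSet G) (hhits : ∀ x, ∃ n, T^[n] x ∈ G) :
    Tendsto (fun n => μ (avoidSet T G n)) atTop (𝓝 0) := by
  have := tendsto_measure_iInter_atTop (μ := μ)
    (fun n => (measurableSet_avoidSet hT hG n).nullMeasurableSet) antitone_avoidSet
    ⟨0, measure_ne_top _ _⟩
  rwa [iInter_avoidSet_eq_empty hhits, measure_empty] at this

variable {μ ν : Measure α}

/-- Kac's tower decomposition: `μ` is recovered from `μ.restrict G` by pushing forward along
the levels `1, …, r` of the tower over `G`, `r` being the first return time. -/
theorem measure_eq_tsum_restrict_avoidSet [IsFiniteMeasure μ] (hμ : MeasurePreserving T μ μ)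
    (hG : MeasurableSet G) (hhits : ∀ x, ∃ n, T^[n] x ∈ G) {A : Set α} (hA : MeasurableSet A) :
    μ A = ∑' k, μ.restrict G (T ⁻¹' (avoidSet T G k ∩ T^[k] ⁻¹' A)) := by
  set S : ℕ → Set α := fun n => avoidSet T G n ∩ T^[n] ⁻¹' A
  have hS n : MeasurableSet (S n) :=
    (measurableSet_avoidSet hμ.measurable hG n).inter (hA.preimage (hμ.measurable.iterate n))
  have step n : μ (S n) = μ.restrict G (T ⁻¹' S n) + μ (S (n + 1)) :=
    calc μ (S n) = μ (T ⁻¹' S n) := (hμ.measure_preimage (hS n).nullMeasurableSet).symm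
      _ = μ (T ⁻¹' S n ∩ G) + μ (T ⁻¹' S n \ G) := (measure_inter_add_sdiff _ hG).symm
      _ = μ.restrict G (T ⁻¹' S n) + μ (S (n + 1)) := by
        rw [Measure.restrict_apply' hG, Set.sdiff_eq_compl_inter,
          compl_inter_preimage_avoidSet_inter]
  have partial_sums n : μ A = ∑ k ∈ Finset.range n, μ.restrict G (T ⁻¹' S k) + μ (S n) := by
    induction n with
    | zero => simp [S, avoidSet_zero]
    | succ n ih => rw [ih, step, Finset.sum_range_succ, add_assoc]
  have hrem : Tendsto (fun n => μ (S n)) atTop (𝓝 0) :=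
    tendsto_of_tendsto_of_tendsto_of_le_of_le tendsto_const_nhds
      (tendsto_measure_avoidSet μ hμ.measurable hG hhits) (fun _ => zero_le)
      (fun _ => measure_mono Set.inter_subset_left)
  exact tendsto_nhds_unique (tendsto_const_nhds.congr partial_sums)
    (by simpa only [add_zero] using (ENNReal.tendsto_nat_tsum _).add hrem)

theorem eq_smul_of_restrict_eq_smul [IsFiniteMeasure μ] [IsFiniteMeasure ν]
    (hμ : MeasurePreserving T μ μ) (hν : MeasurePreserving T ν ν) (hG : MeasurableSet G)
    (hhits : ∀ x, ∃ n, T^[n] x ∈ G) {c : ENNReal} (h : μ.restrict G = c • ν.restrict G) :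
    μ = c • ν := by
  ext A hA
  rw [measure_eq_tsum_restrict_avoidSet hμ hG hhits hA, Measure.smul_apply,
    measure_eq_tsum_restrict_avoidSet hν hG hhits hA, h, smul_eq_mul, ← ENNReal.tsum_mul_left]
  rfl

theorem measure_ne_zero_of_hits [IsFiniteMeasure μ] [NeZero μ] (hμ : MeasurePreserving T μ μ)
    (hG : MeasurableSet G) (hhits : ∀ x, ∃ n, T^[n] x ∈ G) : μ G ≠ 0 := by
  intro h
  have := measure_eq_tsum_restrict_avoidSet hμ hG hhits MeasurableSet.univ
  exact NeZero.ne μ (by simpa [Measure.restrict_eq_zero.2 h] using this)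

theorem map_restrict_hitMap_comp [IsFiniteMeasure μ] (hμ : MeasurePreserving T μ μ)
    (hG : MeasurableSet G) (hhits : ∀ x, ∃ n, T^[n] x ∈ G) :
    (μ.restrict G).map (hitMap T G hhits ∘ T) = μ.restrict G := by
  have hT := hμ.measurable
  ext B hB
  rw [Measure.map_apply ((measurable_hitMap hT hG hhits).comp hT) hB, Set.preimage_comp,
    preimage_hitMap, Set.preimage_iUnion, measure_iUnion, Measure.restrict_apply hB,
    Set.inter_comm B G, measure_eq_tsum_restrict_avoidSet hμ hG hhits (hG.inter hB)]
  · exact fun k l hkl => (pairwise_disjoint_avoidSet_inter_preimage B hkl).preimage T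
  · exact fun k => ((measurableSet_avoidSet hT hG k).inter
      ((hG.inter hB).preimage (hT.iterate k))).preimage hT

theorem map_cond_firstReturn [IsFiniteMeasure μ] (hμ : MeasurePreserving T μ μ)
    (hG : MeasurableSet G) (hhits : ∀ x, ∃ n, T^[n] x ∈ G) {rt : α → ℕ}
    (hrt : IsFirstReturnTime T G rt) :
    μ[|G].map (fun x => T^[rt x] x) = μ[|G] := by
  have hae : (fun x => T^[rt x] x) =ᵐ[μ[|G]] hitMap T G hhits ∘ T :=
    ae_cond_of_forall_mem hG fun x hx => (hitMap_apply_eq_iterate hrt hhits hx).symm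
  rw [Measure.map_congr hae, ProbabilityTheory.cond, Measure.map_smul,
    map_restrict_hitMap_comp hμ hG hhits]

end FirstReturn

open FirstReturn in
theorem unique_ergodicity_from_induced_general {α : Type*} [MeasurableSpace α]
    (T : α → α) (hT : Measurable T)
    (ν : Measure α) [IsProbabilityMeasure ν] (hinv : ν.map T = ν)
    (G : Set α) (hG : MeasurableSet G)
    (m : ℕ) (hcover : (⋃ k ∈ Finset.range (m + 1), T^[k] '' G) = Set.univ)
    (rt : α → ℕ)
    (hrt : ∀ x ∈ G, 1 ≤ rt x ∧ T^[rt x] x ∈ G ∧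
        ∀ k, 0 < k → k < rt x → T^[k] x ∉ G)
    (huniq : ∀ μ : Measure α, IsProbabilityMeasure μ → μ Gᶜ = 0 →
        μ.map (fun x => T^[rt x] x) = μ → μ = (ν G)⁻¹ • ν.restrict G) :
    ∀ μ : Measure α, IsProbabilityMeasure μ → μ.map T = μ → μ = ν := by
  intro μ _ hμT
  have hret : ∀ x ∈ G, ∃ n, 0 < n ∧ T^[n] x ∈ G :=
    fun x hx => ⟨rt x, (hrt x hx).1, (hrt x hx).2.1⟩
  have hhits : ∀ x, ∃ n, T^[n] x ∈ G := fun x =>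
    have ⟨_, _, hx⟩ := Set.mem_iUnion₂.1 (hcover ▸ Set.mem_univ x)
    exists_iterate_mem_of_mem_image hret hx
  have hμ : MeasurePreserving T μ μ := ⟨hT, hμT⟩
  have hμG := measure_ne_zero_of_hits hμ hG hhits
  have hcond : μ[|G] = ν[|G] :=
    huniq _ (cond_isProbabilityMeasure hμG) (by simp [cond_apply hG])
      (map_cond_firstReturn hμ hG hhits hrt)
  have hc : μ = (μ G * (ν G)⁻¹) • ν := by
    refine eq_smul_of_restrict_eq_smul hμ ⟨hT, hinv⟩ hG hhits ?_
    rw [← smul_smul, ← ProbabilityTheory.cond, ← hcond, ProbabilityTheory.cond, smul_smul,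
      ENNReal.mul_inv_cancel hμG (measure_ne_top _ _), one_smul]
  have hc1 : μ G * (ν G)⁻¹ = 1 := by simpa using congr($hc Set.univ).symm
  rw [hc, hc1, one_smul]

theorem unique_ergodicity_from_induced {α : Type*} [MeasurableSpace α]
    (T : α → α) (hT : Measurable T)
    (ν : Measure α) [IsProbabilityMeasure ν] (hinv : ν.map T = ν)
    (G : Set α) (hG : MeasurableSet G) (hνG : 0 < ν G)
    (m : ℕ) (hcover : (⋃ k ∈ Finset.range (m + 1), T^[k] '' G) = Set.univ)
    (rt : α → ℕ)
    (hrt : ∀ x ∈ G, 1 ≤ rt x ∧ T^[rt x] x ∈ G ∧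
        ∀ k, 0 < k → k < rt x → T^[k] x ∉ G)
    (huniq : ∀ μ : Measure α, IsProbabilityMeasure μ → μ Gᶜ = 0 →
        μ.map (fun x => T^[rt x] x) = μ → μ = (ν G)⁻¹ • ν.restrict G) :
    ∀ μ : Measure α, IsProbabilityMeasure μ → μ.map T = μ → μ = ν :=
  unique_ergodicity_from_induced_general T hT ν hinv G hG m hcover rt hrt huniq
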